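/- (Quasi-order comparison) Let G be a finite bipartite graph and v, w two vertices. Write φ(G - w; x) = Σ_k (-1)^k b_{2k} x^{n-1-2k} and φ(G - v; x) = Σ_k (-1)^k c_{2k} x^{n-1-2k} with all b_{2k}, c_{2k} ≥ 0. If b_{2k} ≥ c_{2k} for all k, then E_G(w) ≤ E_G(v). -/

import Mathlib

open Matrix BigOperators Finset Polynomial

noncomputable def adjMat {V : Type*} [Fintype V] (G : SimpleGraph V) : Matrix V V ℝ :=
  letI := Classical.decRel G.Adj; G.adjMatrix ℝ

noncomputable def absMat {V : Type*} [Fintype V] [DecidableEq V] (A : Matrix V V ℝ) :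
    Matrix V V ℝ :=
  letI hA := (Matrix.posSemidef_self_mul_conjTranspose A).1
  (hA.eigenvectorUnitary : Matrix V V ℝ) * diagonal (Real.sqrt ∘ hA.eigenvalues) *
    star (hA.eigenvectorUnitary : Matrix V V ℝ)

/-- The energy of a vertex: the (i,i) entry of |A| = (A Aᴴ)^{1/2}. -/
noncomputable def vertexEnergy {V : Type*} [Fintype V] [DecidableEq V]
    (G : SimpleGraph V) (i : V) : ℝ :=
  absMat (adjMat G) i i

/-!
Write `A` for the (symmetric) adjacency matrix, `μᵢ` and `U` for the eigenvalues and the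
orthogonal eigenvector matrix of `A²`, so that `E_G(u) = ∑ᵢ √μᵢ U_{ui}²`. From
`√μ = (2/π) ∫₀^∞ μ / (μ + y²) dy` one gets the Coulson-type formula
`E_G(u) = (2/π) ∫₀^∞ (1 - y² ((A² + y²)⁻¹)_{uu}) dy`, so it suffices to compare the
diagonal of `(A² + y²)⁻¹` pointwise in `y > 0`.

Factoring `A² + y² = (iy - A)(-iy - A)` shows `(A² + y²)⁻¹ = -Im((iy - A)⁻¹) / y`, and by
Cramer's rule `((iy - A)⁻¹)_{uu} = φ(G - u; iy) / φ(G; iy)`. A polynomial of the alternating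
form `∑ₖ (-1)ᵏ b_{2k} x^{n-2k}` takes the value `iⁿ ∑ₖ b_{2k} y^{n-2k}` at `x = iy`, so
`((A² + y²)⁻¹)_{uu} = g(y) ∑ₖ b_{2k}(u) y^{n-2k}` with a factor `g(y) ≥ 0` that does not
depend on `u`. Coefficientwise domination `b ≥ c` then gives the comparison.
-/

open MeasureTheory Set

lemma integrableOn_Ioi_div_add_sq {μ : ℝ} (hμ : 0 ≤ μ) :
    IntegrableOn (fun y => μ / (μ + y ^ 2)) (Ioi 0) := by
  rcases hμ.eq_or_lt with rfl | hμ
  · simp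
  have h := (integrableOn_Ioi_comp_mul_left_iff (fun t : ℝ => (1 + t ^ 2)⁻¹) 0
    (inv_pos.mpr (Real.sqrt_pos.mpr hμ))).mpr integrable_inv_one_add_sq.integrableOn
  refine h.congr_fun (fun y _ => ?_) measurableSet_Ioi
  field_simp
  rw [Real.sq_sqrt hμ.le, mul_comm]

lemma integral_Ioi_div_add_sq {μ : ℝ} (hμ : 0 ≤ μ) :
    ∫ y in Ioi 0, μ / (μ + y ^ 2) = Real.pi / 2 * Real.sqrt μ := by
  rcases hμ.eq_or_lt with rfl | hμ
  · simp
  have hs := Real.sqrt_pos.mpr hμ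
  have h := integral_comp_mul_left_Ioi (fun t : ℝ => (1 + t ^ 2)⁻¹) 0 (inv_pos.mpr hs)
  rw [mul_zero, integral_Ioi_inv_one_add_sq, Real.arctan_zero, sub_zero, inv_inv,
    smul_eq_mul] at h
  rw [mul_comm, ← h]
  refine setIntegral_congr_fun measurableSet_Ioi (fun y _ => ?_)
  field_simp
  rw [Real.sq_sqrt hμ.le, mul_comm]

namespace Matrix.IsHermitian

variable {V : Type*} [Fintype V] [DecidableEq V] {M : Matrix V V ℝ} (hM : M.IsHermitian)

lemma cfc_apply_self (f : ℝ → ℝ) (u : V) :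
    hM.cfc f u u =
      ∑ i, f (hM.eigenvalues i) * (hM.eigenvectorUnitary : Matrix V V ℝ) u i ^ 2 := by
  simp [IsHermitian.cfc, mul_apply, diagonal_apply, sq, mul_comm, mul_left_comm]

lemma sum_eigenvectorUnitary_apply_sq (u : V) :
    ∑ i, (hM.eigenvectorUnitary : Matrix V V ℝ) u i ^ 2 = 1 := by
  have h := hM.cfc_apply_self (fun _ => 1) u
  rw [← hM.cfc_eq, cfc_const_one ℝ M] at h
  simpa using h.symm

lemma inv_add_smul_one_eq_cfc {t : ℝ} (ht : ∀ i, hM.eigenvalues i + t ≠ 0) :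
    (M + t • 1)⁻¹ = hM.cfc (fun x => (x + t)⁻¹) := by
  rw [← hM.cfc_eq, cfc_inv (fun x => x + t) M, cfc_add_const t (fun x => x) M, cfc_id' ℝ M,
    nonsing_inv_eq_ringInverse, Algebra.algebraMap_eq_smul_one]
  rw [hM.spectrum_real_eq_range_eigenvalues]
  rintro _ ⟨i, rfl⟩
  exact ht i

end Matrix.IsHermitian

namespace Matrix.PosSemidef

variable {V : Type*} [Fintype V] [DecidableEq V] {M : Matrix V V ℝ}

lemma one_sub_mul_inv_add_apply_self (hM : M.PosSemidef) {y : ℝ} (hy : y ≠ 0) (u : V) :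
    1 - y ^ 2 * (M + y ^ 2 • 1)⁻¹ u u =
      ∑ i, hM.1.eigenvalues i / (hM.1.eigenvalues i + y ^ 2) *
        (hM.1.eigenvectorUnitary : Matrix V V ℝ) u i ^ 2 := by
  have hpos : ∀ i, 0 < hM.1.eigenvalues i + y ^ 2 := fun i =>
    add_pos_of_nonneg_of_pos (hM.eigenvalues_nonneg i) (by positivity)
  rw [hM.1.inv_add_smul_one_eq_cfc fun i => (hpos i).ne', hM.1.cfc_apply_self, Finset.mul_sum,
    ← hM.1.sum_eigenvectorUnitary_apply_sq u, ← Finset.sum_sub_distrib]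
  refine Finset.sum_congr rfl fun i _ => ?_
  field_simp [(hpos i).ne']
  ring

lemma integrableOn_one_sub_mul_inv_add_apply_self (hM : M.PosSemidef) (u : V) :
    IntegrableOn (fun y => 1 - y ^ 2 * (M + y ^ 2 • 1)⁻¹ u u) (Ioi (0 : ℝ)) := by
  refine IntegrableOn.congr_fun (integrable_finsetSum _ fun i _ =>
    (integrableOn_Ioi_div_add_sq (hM.eigenvalues_nonneg i)).mul_const _)
      (fun y hy => (hM.one_sub_mul_inv_add_apply_self (ne_of_gt hy) u).symm) measurableSet_Ioi

lemma integral_one_sub_mul_inv_add_apply_self (hM : M.PosSemidef) (u : V) :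
    ∫ y in Ioi (0 : ℝ), (1 - y ^ 2 * (M + y ^ 2 • 1)⁻¹ u u) =
      Real.pi / 2 * hM.1.cfc Real.sqrt u u := by
  rw [setIntegral_congr_fun measurableSet_Ioi
      (fun y hy => hM.one_sub_mul_inv_add_apply_self (ne_of_gt hy) u),
    integral_finsetSum _ fun i _ =>
      (integrableOn_Ioi_div_add_sq (hM.eigenvalues_nonneg i)).mul_const _,
    hM.1.cfc_apply_self, Finset.mul_sum]
  refine Finset.sum_congr rfl fun i _ => ?_
  rw [integral_mul_const, integral_Ioi_div_add_sq (hM.eigenvalues_nonneg i), mul_assoc]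

theorem cfc_sqrt_apply_self_le (hM : M.PosSemidef) {v w : V}
    (h : ∀ y : ℝ, 0 < y → (M + y ^ 2 • 1)⁻¹ v v ≤ (M + y ^ 2 • 1)⁻¹ w w) :
    hM.1.cfc Real.sqrt w w ≤ hM.1.cfc Real.sqrt v v := by
  have hmono := setIntegral_mono_on (hM.integrableOn_one_sub_mul_inv_add_apply_self w)
    (hM.integrableOn_one_sub_mul_inv_add_apply_self v) measurableSet_Ioi
    fun y hy => sub_le_sub_left (mul_le_mul_of_nonneg_left (h y hy) (sq_nonneg y)) 1
  rw [hM.integral_one_sub_mul_inv_add_apply_self, hM.integral_one_sub_mul_inv_add_apply_self]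
    at hmono
  exact le_of_mul_le_mul_left hmono (by positivity)

end Matrix.PosSemidef

noncomputable def alternatingPoly (n : ℕ) (b : ℕ → ℝ) : ℝ[X] :=
  ∑ k ∈ Finset.range (n / 2 + 1), C ((-1 : ℝ) ^ k * b k) * X ^ (n - 2 * k)

noncomputable def unsignedPoly (n : ℕ) (b : ℕ → ℝ) : ℝ[X] :=
  ∑ k ∈ Finset.range (n / 2 + 1), C (b k) * X ^ (n - 2 * k)

lemma aeval_I_mul_alternatingPoly (n : ℕ) (b : ℕ → ℝ) (y : ℝ) :
    aeval (y * Complex.I) (alternatingPoly n b) =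
      Complex.I ^ n * (((unsignedPoly n b).eval y : ℝ) : ℂ) := by
  simp only [alternatingPoly, unsignedPoly, map_sum, eval_finsetSum, Complex.ofReal_sum,
    Finset.mul_sum, map_mul, aeval_C, aeval_X_pow, eval_mul, eval_C, eval_pow, eval_X]
  refine Finset.sum_congr rfl fun k hk => ?_
  have hI : Complex.I ^ n = Complex.I ^ (n - 2 * k) * (-1) ^ k := by
    rw [← Complex.I_sq, ← pow_mul, ← pow_add, Nat.sub_add_cancel]
    have := Finset.mem_range.mp hk
    omega
  rw [hI, Complex.coe_algebraMap]
  push_cast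
  ring

lemma unsignedPoly_eval_mono {n : ℕ} {b c : ℕ → ℝ} (hbc : ∀ k, c k ≤ b k) {y : ℝ}
    (hy : 0 ≤ y) :
    (unsignedPoly n c).eval y ≤ (unsignedPoly n b).eval y := by
  simp only [unsignedPoly, eval_finsetSum, eval_mul, eval_C, eval_pow, eval_X]
  gcongr with k
  exact hbc k

lemma unsignedPoly_eval_pos {n : ℕ} {b : ℕ → ℝ} (hb : ∀ k, 0 ≤ b k)
    (hne : alternatingPoly n b ≠ 0) {y : ℝ} (hy : 0 < y) : 0 < (unsignedPoly n b).eval y := by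
  simp only [unsignedPoly, eval_finsetSum, eval_mul, eval_C, eval_pow, eval_X]
  have hterm : ∀ k ∈ Finset.range (n / 2 + 1), 0 ≤ b k * y ^ (n - 2 * k) := fun k _ =>
    mul_nonneg (hb k) (pow_nonneg hy.le _)
  refine lt_of_le_of_ne (Finset.sum_nonneg hterm) fun h => hne ?_
  refine Finset.sum_eq_zero fun k hk => ?_
  have hk := (Finset.sum_eq_zero_iff_of_nonneg hterm).mp h.symm k hk
  simp [(mul_eq_zero.mp hk).resolve_right (pow_pos hy _).ne']

namespace Matrix

lemma inv_apply_self_eq_det_submatrix {K : Type*} [Field K] {n : ℕ}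
    (X : Matrix (Fin (n + 1)) (Fin (n + 1)) K) (u : Fin (n + 1)) :
    X⁻¹ u u = X.det⁻¹ * (X.submatrix u.succAbove u.succAbove).det := by
  rw [inv_def, Ring.inverse_eq_inv', smul_apply, adjugate_fin_succ_eq_det_submatrix,
    ← two_mul, pow_mul, neg_one_sq, one_pow, one_mul, smul_eq_mul]

lemma inv_smul_one_sub_apply_self {K : Type*} [Field K] {n : ℕ}
    (X : Matrix (Fin (n + 1)) (Fin (n + 1)) K) (z : K) (u : Fin (n + 1)) :
    (z • 1 - X)⁻¹ u u =
      (X.submatrix u.succAbove u.succAbove).charpoly.eval z / X.charpoly.eval z := by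
  have hsub : (z • 1 - X).submatrix u.succAbove u.succAbove =
      scalar (Fin n) z - X.submatrix u.succAbove u.succAbove := by
    ext i j
    simp [one_apply, diagonal_apply, Fin.succAbove_right_injective.eq_iff]
  rw [inv_apply_self_eq_det_submatrix, hsub, eval_charpoly, eval_charpoly, div_eq_inv_mul,
    scalar_apply, scalar_apply, smul_one_eq_diagonal]

lemma im_inv_I_mul_smul_one_sub_apply {V : Type*} [Fintype V] [DecidableEq V]
    (A : Matrix V V ℝ) {y : ℝ} (hA : IsUnit (A * A + y ^ 2 • 1).det) (i j : V) :
    (((y * Complex.I) • 1 - A.map Complex.ofRealHom)⁻¹ i j).im =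
      -y * (A * A + y ^ 2 • 1)⁻¹ i j := by
  set X := (A * A + y ^ 2 • 1)⁻¹
  have hprod : ((y * Complex.I) • 1 - A.map Complex.ofRealHom) *
      ((-(y * Complex.I)) • 1 - A.map Complex.ofRealHom) =
      (A * A + y ^ 2 • 1).map Complex.ofRealHom := by
    ext i j
    by_cases h : i = j
    · simp [h, sub_mul, mul_sub, ← Matrix.map_mul, mul_mul_mul_comm _ Complex.I, sq]
      ring
    · simp [h, sub_mul, mul_sub, ← Matrix.map_mul]
  have hinv : ((y * Complex.I) • 1 - A.map Complex.ofRealHom)⁻¹ =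
      ((-(y * Complex.I)) • 1 - A.map Complex.ofRealHom) * X.map Complex.ofRealHom := by
    refine inv_eq_right_inv ?_
    rw [← Matrix.mul_assoc, hprod, ← Matrix.map_mul, mul_nonsing_inv _ hA,
      Matrix.map_one _ (map_zero _) (map_one _)]
  rw [hinv]
  simp [sub_mul, ← Matrix.map_mul]

lemma inv_mul_self_add_sq_apply_self_eq {n : ℕ} (A : Matrix (Fin (n + 1)) (Fin (n + 1)) ℝ)
    {y : ℝ} (hy : y ≠ 0) (hA : IsUnit (A * A + y ^ 2 • 1).det) {u : Fin (n + 1)}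
    {b : ℕ → ℝ}
    (hu : (A.submatrix u.succAbove u.succAbove).charpoly = alternatingPoly n b) :
    (A * A + y ^ 2 • 1)⁻¹ u u =
      -(Complex.I ^ n / aeval (y * Complex.I) A.charpoly).im / y * (unsignedPoly n b).eval y := by
  have heval (p : ℝ[X]) :
      (p.map Complex.ofRealHom).eval (y * Complex.I) = aeval (y * Complex.I) p :=
    eval_map_algebraMap p _
  have h := A.im_inv_I_mul_smul_one_sub_apply hA u u
  rw [inv_smul_one_sub_apply_self, submatrix_map, charpoly_map, charpoly_map, heval, heval, hu,
    aeval_I_mul_alternatingPoly, mul_div_right_comm, Complex.im_mul_ofReal] at h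
  field_simp
  linarith

lemma inv_mul_conjTranspose_add_sq_apply_self_le {n : ℕ}
    {A : Matrix (Fin (n + 1)) (Fin (n + 1)) ℝ} (hA : A.IsHermitian) {v w : Fin (n + 1)}
    {b c : ℕ → ℝ} (hb : ∀ k, 0 ≤ b k)
    (hw : (A.submatrix w.succAbove w.succAbove).charpoly = alternatingPoly n b)
    (hv : (A.submatrix v.succAbove v.succAbove).charpoly = alternatingPoly n c)
    (hbc : ∀ k, c k ≤ b k) {y : ℝ} (hy : 0 < y) :
    (A * Aᴴ + y ^ 2 • 1)⁻¹ v v ≤ (A * Aᴴ + y ^ 2 • 1)⁻¹ w w := by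
  have hpd : (A * Aᴴ + y ^ 2 • 1).PosDef :=
    PosDef.posSemidef_add (posSemidef_self_mul_conjTranspose A) (PosDef.one.smul (by positivity))
  have hw_nonneg : 0 ≤ (A * Aᴴ + y ^ 2 • 1)⁻¹ w w := hpd.posSemidef.inv.diag_nonneg
  have hunit : IsUnit (A * A + y ^ 2 • 1).det := by
    simpa only [hA.eq] using (isUnit_iff_isUnit_det _).mp hpd.isUnit
  have hb_pos := unsignedPoly_eval_pos hb (hw ▸ (charpoly_monic _).ne_zero) hy
  rw [hA.eq] at hw_nonneg ⊢
  rw [inv_mul_self_add_sq_apply_self_eq A hy.ne' hunit hw] at hw_nonneg ⊢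
  rw [inv_mul_self_add_sq_apply_self_eq A hy.ne' hunit hv]
  exact mul_le_mul_of_nonneg_left (unsignedPoly_eval_mono hbc hy.le)
    (nonneg_of_mul_nonneg_left hw_nonneg hb_pos)

end Matrix

lemma adjMat_isHermitian {V : Type*} [Fintype V] (G : SimpleGraph V) : (adjMat G).IsHermitian :=
  letI := Classical.decRel G.Adj; G.isHermitian_adjMatrix ℝ

theorem vertex_energy_quasiOrder_general {n : ℕ} (G : SimpleGraph (Fin (n + 1)))
    (v w : Fin (n + 1)) (b c : ℕ → ℝ)
    (hb : ∀ k, 0 ≤ b k)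
    (hw : ((adjMat G).submatrix w.succAbove w.succAbove).charpoly
        = ∑ k ∈ Finset.range (n / 2 + 1),
            Polynomial.C ((-1 : ℝ) ^ k * b k) * Polynomial.X ^ (n - 2 * k))
    (hv : ((adjMat G).submatrix v.succAbove v.succAbove).charpoly
        = ∑ k ∈ Finset.range (n / 2 + 1),
            Polynomial.C ((-1 : ℝ) ^ k * c k) * Polynomial.X ^ (n - 2 * k))
    (hbc : ∀ k, c k ≤ b k) :
    vertexEnergy G w ≤ vertexEnergy G v :=
  (posSemidef_self_mul_conjTranspose (adjMat G)).cfc_sqrt_apply_self_le fun _ hy =>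
    inv_mul_conjTranspose_add_sq_apply_self_le (adjMat_isHermitian G) hb hw hv hbc hy

/-- quasi-order comparison: let G be bipartite on n+1 vertices, with
φ(G-w;x) = Σ_k (-1)^k b_{2k} x^{n-2k} and φ(G-v;x) = Σ_k (-1)^k c_{2k} x^{n-2k},
b_{2k}, c_{2k} ≥ 0. If b_{2k} ≥ c_{2k} for all k then E_G(w) ≤ E_G(v). -/
theorem vertex_energy_quasiOrder {n : ℕ} (G : SimpleGraph (Fin (n + 1)))
    (hG : G.Colorable 2) (v w : Fin (n + 1)) (b c : ℕ → ℝ)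
    (hb : ∀ k, 0 ≤ b k) (hc : ∀ k, 0 ≤ c k)
    (hw : ((adjMat G).submatrix w.succAbove w.succAbove).charpoly
        = ∑ k ∈ Finset.range (n / 2 + 1),
            Polynomial.C ((-1 : ℝ) ^ k * b k) * Polynomial.X ^ (n - 2 * k))
    (hv : ((adjMat G).submatrix v.succAbove v.succAbove).charpoly
        = ∑ k ∈ Finset.range (n / 2 + 1),
            Polynomial.C ((-1 : ℝ) ^ k * c k) * Polynomial.X ^ (n - 2 * k))
    (hbc : ∀ k, c k ≤ b k) :
    vertexEnergy G w ≤ vertexEnergy G v :=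
  vertex_energy_quasiOrder_general G v w b c hb hw hv hbc
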